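/- Let K be a field of characteristic zero and let A be an essential line arrangement in P² over K. Suppose there exist H ∈ A and an intersection point p of A lying on H such that m^H(p) ≥ |A|/2, where m^H(p) denotes the number of lines of A \ {H} passing through p. Then n₂(A) > 0, i.e., A has at least one double point. -/

import Mathlib

/-! Basic setup: the projective plane over a field `K` is modelled by linear
subspaces of `K³ = Fin 3 → K`: projective points are 1-dimensional subspaces
and projective lines are 2-dimensional subspaces; incidence is inclusion. -/

variable (K : Type*) [Field K]

/-- A point of `P²`: a 1-dimensional linear subspace of `K³`. -/
def IsPoint (p : Submodule K (Fin 3 → K)) : Prop :=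
  Module.finrank K p = 1

/-- A line of `P²`: a 2-dimensional linear subspace of `K³`. -/
def IsLine (H : Submodule K (Fin 3 → K)) : Prop :=
  Module.finrank K H = 2

/-- A line arrangement: a finite set of lines in `P²`. -/
def IsArrangement (A : Finset (Submodule K (Fin 3 → K))) : Prop :=
  ∀ H ∈ A, IsLine K H

/-- An arrangement is essential if its lines have no common point. -/
def Essential (A : Finset (Submodule K (Fin 3 → K))) : Prop :=
  ¬ ∃ p : Submodule K (Fin 3 → K), IsPoint K p ∧ ∀ H ∈ A, p ≤ H

/-- The multiplicity of a point `p`: the number of lines of `A` passing through `p`. -/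
noncomputable def mult (A : Finset (Submodule K (Fin 3 → K)))
    (p : Submodule K (Fin 3 → K)) : ℕ :=
  {H ∈ (A : Set (Submodule K (Fin 3 → K))) | p ≤ H}.ncard

/-- An intersection point of `A`: a point lying on at least two lines of `A`. -/
def IsIntersectionPoint (A : Finset (Submodule K (Fin 3 → K)))
    (p : Submodule K (Fin 3 → K)) : Prop :=
  IsPoint K p ∧ 2 ≤ mult K A p

/-- A double point of `A`: a point lying on exactly two lines of `A`. -/
def IsDoublePoint (A : Finset (Submodule K (Fin 3 → K)))
    (p : Submodule K (Fin 3 → K)) : Prop :=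
  IsPoint K p ∧ mult K A p = 2

/-- `n₂(A)`: the number of double points of `A`. -/
noncomputable def n2 (A : Finset (Submodule K (Fin 3 → K))) : ℕ :=
  {p | IsDoublePoint K A p}.ncard

/-- `n₂(H)`: the number of double points of `A` lying on the line `H`. -/
noncomputable def n2on (A : Finset (Submodule K (Fin 3 → K)))
    (H : Submodule K (Fin 3 → K)) : ℕ :=
  {p | IsDoublePoint K A p ∧ p ≤ H}.ncard

/-- `|A^H|`: the number of intersection points of `A` lying on the line `H`. -/
noncomputable def pointsOn (A : Finset (Submodule K (Fin 3 → K)))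
    (H : Submodule K (Fin 3 → K)) : ℕ :=
  {p | IsIntersectionPoint K A p ∧ p ≤ H}.ncard

/-- `p` is a modular point of `A`: an intersection point such that for all distinct
lines `H, L` of `A` not passing through `p`, the point `H ∩ L` lies on some line
of `A` through `p`. -/
def IsModular (A : Finset (Submodule K (Fin 3 → K)))
    (p : Submodule K (Fin 3 → K)) : Prop :=
  IsIntersectionPoint K A p ∧
    ∀ H ∈ A, ∀ L ∈ A, ¬ p ≤ H → ¬ p ≤ L → H ≠ L →
      ∃ K' ∈ A, p ≤ K' ∧ H ⊓ L ≤ K'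

/-- An arrangement is supersolvable if it has a modular point. -/
def Supersolvable (A : Finset (Submodule K (Fin 3 → K))) : Prop :=
  ∃ p, IsModular K A p

/-! Essentiality gives a line `L ∈ A` missing `p`. The `m^H(p) + 1` lines through `p` meet `L`
in distinct points. If none of these is a double point, each lies on at least two lines of `A`
other than `L`, and different points get different lines, so `2 (m^H(p) + 1) ≤ |A| - 1`,
contradicting `m^H(p) ≥ |A| / 2`. -/

section Incidence

variable {K}

theorem IsLine.isPoint_inf {M L : Submodule K (Fin 3 → K)} (hM : IsLine K M) (hL : IsLine K L)
    (hne : M ≠ L) : IsPoint K (M ⊓ L) := by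
  have hsum := Submodule.finrank_sup_add_finrank_inf_eq M L
  have hsup_le : Module.finrank K ↥(M ⊔ L) ≤ 3 := by
    simpa using Submodule.finrank_le (M ⊔ L)
  have hsup : Module.finrank K ↥(M ⊔ L) = 3 := by
    by_contra h
    have hM_eq : M = M ⊔ L :=
      Submodule.eq_of_le_of_finrank_le le_sup_left (by rw [hM]; omega)
    exact hne (Submodule.eq_of_le_of_finrank_le (hM_eq ▸ le_sup_right) (by rw [hM, hL])).symm
  unfold IsPoint
  rw [hM, hL] at hsum
  omega

theorem IsPoint.eq_inf {q M L : Submodule K (Fin 3 → K)} (hq : IsPoint K q)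
    (hM : IsLine K M) (hL : IsLine K L) (hne : M ≠ L) (hqM : q ≤ M) (hqL : q ≤ L) :
    q = M ⊓ L :=
  Submodule.eq_of_le_of_finrank_le (le_inf hqM hqL) (by rw [hq, hM.isPoint_inf hL hne])

end Incidence

section Counting

variable {K} {A : Finset (Submodule K (Fin 3 → K))}

open Classical in
noncomputable def linesThrough (A : Finset (Submodule K (Fin 3 → K)))
    (q : Submodule K (Fin 3 → K)) : Finset (Submodule K (Fin 3 → K)) :=
  A.filter (q ≤ ·)

theorem mem_linesThrough {q M : Submodule K (Fin 3 → K)} :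
    M ∈ linesThrough A q ↔ M ∈ A ∧ q ≤ M := by
  classical
  simp [linesThrough]

theorem card_linesThrough (q : Submodule K (Fin 3 → K)) :
    (linesThrough A q).card = mult K A q := by
  classical
  rw [mult, linesThrough, ← Set.ncard_coe_finset, Finset.coe_filter]
  rfl

theorem mult_erase_add_one [DecidableEq (Submodule K (Fin 3 → K))]
    {H p : Submodule K (Fin 3 → K)} (hH : H ∈ A) (hpH : p ≤ H) :
    mult K (A.erase H) p + 1 = mult K A p := by
  have hset : {M ∈ ((A.erase H : Finset _) : Set (Submodule K (Fin 3 → K))) | p ≤ M} =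
      {M ∈ (A : Set (Submodule K (Fin 3 → K))) | p ≤ M} \ {H} := by
    ext M
    simp only [Finset.coe_erase, Set.mem_ofPred_eq, Set.mem_sdiff, Set.mem_singleton_iff]
    tauto
  rw [mult, mult, hset, Set.ncard_sdiff_singleton_add_one
    (show H ∈ {M ∈ (A : Set (Submodule K (Fin 3 → K))) | p ≤ M} from ⟨hH, hpH⟩)]

theorem finite_setOf_isDoublePoint (hA : IsArrangement K A) :
    {q | IsDoublePoint K A q}.Finite := by
  refine (A.finite_toSet.image2 (· ⊓ ·) A.finite_toSet).subset ?_
  rintro q ⟨hq, hmult⟩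
  obtain ⟨M, N, hMN, hpair⟩ := Set.ncard_eq_two.mp hmult
  have hM : M ∈ {H ∈ (A : Set _) | q ≤ H} := hpair ▸ Set.mem_insert M {N}
  have hN : N ∈ {H ∈ (A : Set _) | q ≤ H} := hpair ▸ Set.mem_insert_of_mem M rfl
  exact ⟨M, hM.1, N, hN.1, (hq.eq_inf (hA M hM.1) (hA N hN.1) hMN hM.2 hN.2).symm⟩

theorem n2_pos_of_isDoublePoint (hA : IsArrangement K A) {q : Submodule K (Fin 3 → K)}
    (hq : IsDoublePoint K A q) : 0 < n2 K A :=
  (Set.ncard_pos (finite_setOf_isDoublePoint hA)).mpr ⟨q, hq⟩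

variable {p L : Submodule K (Fin 3 → K)}

open Classical in
theorem disjoint_erase_linesThrough_inf (hA : IsArrangement K A) (hL : L ∈ A)
    (hp : IsPoint K p) (hpL : ¬ p ≤ L) {M M' : Submodule K (Fin 3 → K)}
    (hM : M ∈ linesThrough A p) (hM' : M' ∈ linesThrough A p) (hne : M ≠ M') :
    Disjoint ((linesThrough A (M ⊓ L)).erase L) ((linesThrough A (M' ⊓ L)).erase L) := by
  rw [Finset.disjoint_left]
  intro N hN hN'
  rw [Finset.mem_erase, mem_linesThrough] at hN hN'
  rw [mem_linesThrough] at hM hM'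
  have hML : M ≠ L := fun h => hpL (h ▸ hM.2)
  have hM'L : M' ≠ L := fun h => hpL (h ▸ hM'.2)
  have hq : IsPoint K (M ⊓ L) := (hA M hM.1).isPoint_inf (hA L hL) hML
  have hq' : IsPoint K (M' ⊓ L) := (hA M' hM'.1).isPoint_inf (hA L hL) hM'L
  -- both meets are the point `N ∩ L`, hence they lie on `M ∩ M' = p`
  have hmeet : M ⊓ L = M' ⊓ L := by
    rw [hq.eq_inf (hA N hN.2.1) (hA L hL) hN.1 hN.2.2 inf_le_right,
      hq'.eq_inf (hA N hN'.2.1) (hA L hL) hN'.1 hN'.2.2 inf_le_right]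
  have hp_eq : p = M ⊓ M' := hp.eq_inf (hA M hM.1) (hA M' hM'.1) hne hM.2 hM'.2
  have hmeet_eq : M ⊓ L = M ⊓ M' :=
    hq.eq_inf (hA M hM.1) (hA M' hM'.1) hne inf_le_left (hmeet ▸ inf_le_left)
  exact hpL (hp_eq ▸ hmeet_eq ▸ inf_le_right)

theorem two_mul_mult_lt_card_of_no_doublePoint (hA : IsArrangement K A) (hL : L ∈ A)
    (hp : IsPoint K p) (hpL : ¬ p ≤ L) (hnd : ∀ q ≤ L, ¬ IsDoublePoint K A q) :
    2 * mult K A p < A.card := by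
  classical
  set G := fun M => (linesThrough A (M ⊓ L)).erase L
  have hG_card : ∀ M ∈ linesThrough A p, 2 ≤ (G M).card := by
    intro M hM
    rw [mem_linesThrough] at hM
    have hML : M ≠ L := fun h => hpL (h ▸ hM.2)
    have hq : IsPoint K (M ⊓ L) := (hA M hM.1).isPoint_inf (hA L hL) hML
    have hmult : 2 ≤ mult K A (M ⊓ L) := by
      rw [← card_linesThrough]
      exact Finset.one_lt_card.mpr ⟨M, mem_linesThrough.mpr ⟨hM.1, inf_le_left⟩,
        L, mem_linesThrough.mpr ⟨hL, inf_le_right⟩, hML⟩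
    have hnot2 : mult K A (M ⊓ L) ≠ 2 := fun h => hnd _ inf_le_right ⟨hq, h⟩
    rw [Finset.card_erase_of_mem (mem_linesThrough.mpr ⟨hL, inf_le_right⟩), card_linesThrough]
    omega
  have hG_sub : (linesThrough A p).biUnion G ⊆ A.erase L := by
    intro N hN
    obtain ⟨M, -, hNM⟩ := Finset.mem_biUnion.mp hN
    rw [Finset.mem_erase, mem_linesThrough] at hNM
    exact Finset.mem_erase.mpr ⟨hNM.1, hNM.2.1⟩
  have hL_card := Finset.card_erase_add_one hL
  calc 2 * mult K A p = ∑ _M ∈ linesThrough A p, 2 := by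
        rw [Finset.sum_const, smul_eq_mul, card_linesThrough, mul_comm]
    _ ≤ ∑ M ∈ linesThrough A p, (G M).card := Finset.sum_le_sum hG_card
    _ = ((linesThrough A p).biUnion G).card :=
        (Finset.card_biUnion fun M hM M' hM' hne =>
          disjoint_erase_linesThrough_inf hA hL hp hpL hM hM' hne).symm
    _ ≤ (A.erase L).card := Finset.card_le_card hG_sub
    _ < A.card := by omega

end Counting

theorem n2_pos_of_big_multiplicity_general
    (K : Type*) [Field K]
    (A : Finset (Submodule K (Fin 3 → K)))
    (hA : IsArrangement K A) (hess : Essential K A)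
    [DecidableEq (Submodule K (Fin 3 → K))]
    (H : Submodule K (Fin 3 → K)) (hH : H ∈ A)
    (p : Submodule K (Fin 3 → K))
    (hp : IsIntersectionPoint K A p) (hpH : p ≤ H)
    (hbig : (A.card : ℚ) / 2 ≤ (mult K (A.erase H) p : ℚ)) :
    0 < n2 K A := by
  obtain ⟨L, hL, hpL⟩ : ∃ L ∈ A, ¬ p ≤ L := by
    by_contra! h
    exact hess ⟨p, hp.1, h⟩
  by_contra hn2
  have hnd : ∀ q ≤ L, ¬ IsDoublePoint K A q := fun q _ hq => hn2 (n2_pos_of_isDoublePoint hA hq)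
  have hcount := two_mul_mult_lt_card_of_no_doublePoint hA hL hp.1 hpL hnd
  have hmult := mult_erase_add_one hH hpH
  have hbig' : A.card ≤ 2 * mult K (A.erase H) p := by
    rw [div_le_iff₀ two_pos] at hbig
    exact_mod_cast hbig.trans_eq (mul_comm _ _)
  omega

/-- **Theorem.** Let `A` be an essential line arrangement over a field of
characteristic zero.  If there exist `H ∈ A` and an intersection point `p` of
`A` on `H` such that the number `m^H(p)` of lines of `A \ {H}` through `p` is
at least `|A|/2`, then `n₂(A) > 0`. -/
theorem n2_pos_of_big_multiplicity
    (K : Type*) [Field K] [CharZero K]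
    (A : Finset (Submodule K (Fin 3 → K)))
    (hA : IsArrangement K A) (hess : Essential K A)
    [DecidableEq (Submodule K (Fin 3 → K))]
    (H : Submodule K (Fin 3 → K)) (hH : H ∈ A)
    (p : Submodule K (Fin 3 → K))
    (hp : IsIntersectionPoint K A p) (hpH : p ≤ H)
    (hbig : (A.card : ℚ) / 2 ≤ (mult K (A.erase H) p : ℚ)) :
    0 < n2 K A :=
  n2_pos_of_big_multiplicity_general K A hA hess H hH p hp hpH hbig
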